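/- Let ω, f be real numbers with f ≠ 0. Let 𝒯_B be the 2×2 complex matrix 𝒯_B = (e^{iω}/f)·[[f·cos f − i·ω·sin f, sin f], [(ω² − f²)·sin f, f·cos f + i·ω·sin f]]. Then for every complex number s, det(𝒯_B − s·𝟙) = s² − 2·cos f·e^{iω}·s + e^{2iω}. In particular det 𝒯_B = e^{2iω} and trace 𝒯_B = 2·cos f·e^{iω}. -/

import Mathlib

open Matrix

theorem Matrix.det_sub_smul_one_fin_two {R : Type*} [CommRing R] (A : Matrix (Fin 2) (Fin 2) R)
    (s : R) : (A - s • (1 : Matrix (Fin 2) (Fin 2) R)).det = s ^ 2 - A.trace * s + A.det := by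
  simp only [det_fin_two, trace_fin_two, Fin.isValue, sub_apply, smul_apply, one_apply_eq,
    one_apply_ne, ne_eq, zero_ne_one, one_ne_zero, not_false_eq_true, smul_eq_mul, mul_one,
    mul_zero, sub_zero]
  ring

noncomputable def ebeamMonodromyCore (ω f : ℝ) : Matrix (Fin 2) (Fin 2) ℂ :=
  !![(f : ℂ) * (Real.cos f : ℂ) - Complex.I * (ω : ℂ) * (Real.sin f : ℂ),
     (Real.sin f : ℂ);
     ((ω : ℂ) ^ 2 - (f : ℂ) ^ 2) * (Real.sin f : ℂ),
     (f : ℂ) * (Real.cos f : ℂ) + Complex.I * (ω : ℂ) * (Real.sin f : ℂ)]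

theorem det_ebeamMonodromyCore (ω f : ℝ) : (ebeamMonodromyCore ω f).det = (f : ℂ) ^ 2 := by
  have hpyth : (Real.sin f : ℂ) ^ 2 + (Real.cos f : ℂ) ^ 2 = 1 := by
    exact_mod_cast Real.sin_sq_add_cos_sq f
  rw [ebeamMonodromyCore, det_fin_two_of]
  linear_combination (f : ℂ) ^ 2 * hpyth - (ω : ℂ) ^ 2 * (Real.sin f : ℂ) ^ 2 * Complex.I_sq

theorem trace_ebeamMonodromyCore (ω f : ℝ) :
    (ebeamMonodromyCore ω f).trace = 2 * (f : ℂ) * (Real.cos f : ℂ) := by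
  rw [ebeamMonodromyCore, trace_fin_two_of]
  ring

/-- The characteristic polynomial of the decoupled e-beam monodromy matrix:
`det (𝒯_B - s 𝟙) = s² - 2 cos f · e^{iω} s + e^{2iω}`. -/
theorem ebeam_monodromy_char_poly
    (ω f : ℝ) (hf : f ≠ 0) :
    let e : ℂ := Complex.exp (Complex.I * ω)
    let T : Matrix (Fin 2) (Fin 2) ℂ :=
      (e / (f : ℂ)) • !![(f : ℂ) * (Real.cos f : ℂ) - Complex.I * (ω : ℂ) * (Real.sin f : ℂ),
             (Real.sin f : ℂ);
             ((ω : ℂ) ^ 2 - (f : ℂ) ^ 2) * (Real.sin f : ℂ),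
             (f : ℂ) * (Real.cos f : ℂ) + Complex.I * (ω : ℂ) * (Real.sin f : ℂ)]
    (∀ s : ℂ, (T - s • (1 : Matrix (Fin 2) (Fin 2) ℂ)).det
        = s ^ 2 - 2 * (Real.cos f : ℂ) * e * s + e ^ 2)
      ∧ T.det = e ^ 2 ∧ T.trace = 2 * (Real.cos f : ℂ) * e := by
  intro e T
  have hfc : (f : ℂ) ≠ 0 := by exact_mod_cast hf
  have hdet : T.det = e ^ 2 := by
    rw [show T = (e / f) • ebeamMonodromyCore ω f from rfl, det_smul, det_ebeamMonodromyCore,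
      Fintype.card_fin]
    field_simp
  have htrace : T.trace = 2 * (Real.cos f : ℂ) * e := by
    rw [show T = (e / f) • ebeamMonodromyCore ω f from rfl, trace_smul, trace_ebeamMonodromyCore,
      smul_eq_mul]
    field_simp
  refine ⟨fun s => ?_, hdet, htrace⟩
  rw [det_sub_smul_one_fin_two, hdet, htrace]
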